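/- arXiv:2105.04503 — 8 statements merged into one kernel-verified Lean document; each statement's English description precedes it below -/
import Mathlib

section
/- Let h be an even, 2π-periodic C^∞ function and g_ε := 1 + ε·h. There exists ε₀ > 0 such that for all ε with |ε| < ε₀ and all t ∈ [0, π], one has g_ε(π) + g_ε(t)·cos t ≥ 0, with equality only at t = π. -/
open Real Set

theorem spheres_fill_stmt1 (h : ℝ → ℝ) (hsmooth : ContDiff ℝ (⊤ : ℕ∞) h)
    (heven : ∀ t, h (-t) = h t) (hper : ∀ t, h (t + 2 * π) = h t) :
    ∃ ε₀ > 0, ∀ ε : ℝ, |ε| < ε₀ → ∀ t ∈ Set.Icc 0 π,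
      0 ≤ (1 + ε * h π) + (1 + ε * h t) * Real.cos t ∧
      ((1 + ε * h π) + (1 + ε * h t) * Real.cos t = 0 → t = π) := by
  -- derivatives
  obtain ⟨hdiff, hsm1⟩ := contDiff_infty_iff_deriv.mp (hsmooth.of_le (by simp))
  set h1 := deriv h with hh1
  obtain ⟨hdiff1, hsm2⟩ := contDiff_infty_iff_deriv.mp hsm1
  set h2 := deriv h1 with hh2
  -- h1 is odd
  have hodd : ∀ t, h1 (-t) = - h1 t := by
    intro t
    have : (fun x : ℝ => h (-x)) = h := funext heven
    have := deriv_comp_neg (f := h) (x := t)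
    rw [show (fun x : ℝ => h (-x)) = h from funext heven] at this
    linarith [this]
  -- h1 is periodic
  have hper1 : ∀ t, h1 (t + 2 * π) = h1 t := by
    intro t
    show deriv h (t + 2 * π) = deriv h t
    calc deriv h (t + 2 * π) = deriv (fun x => h (x + 2 * π)) t :=
          (deriv_comp_add_const h (2 * π) t).symm
      _ = deriv h t := by rw [funext hper]
  -- h1 π = 0
  have h1pi : h1 π = 0 := by
    have := hper1 (-π)
    rw [hodd π] at this
    have : h1 π = - h1 π := by rw [← this]; ring_nf
    linarith
  -- bound on h2 on [0, π]
  obtain ⟨K0, hK0⟩ := (isCompact_Icc (a := (0:ℝ)) (b := π)).exists_bound_of_continuousOn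
    hsm2.continuous.continuousOn
  set K := max K0 0 with hKdef
  have hKnn : 0 ≤ K := le_max_right _ _
  have hK : ∀ u ∈ Icc (0:ℝ) π, |h2 u| ≤ K := fun u hu =>
    (hK0 u hu).trans (le_max_left _ _)
  -- |h1 u| ≤ K (π - u) on [0, π]
  have hb1 : ∀ u ∈ Icc (0:ℝ) π, |h1 u| ≤ K * (π - u) := by
    intro u hu
    have key := norm_image_sub_le_of_norm_deriv_le_segment'
      (f := h1) (f' := h2) (a := u) (b := π) (C := K)
      (fun x hx => (hdiff1 x).hasDerivAt.hasDerivWithinAt)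
      (fun x hx => hK x ⟨le_trans hu.1 hx.1, le_of_lt hx.2⟩)
      π ⟨hu.2, le_refl _⟩
    rw [h1pi, Real.norm_eq_abs] at key
    simpa [abs_sub_comm] using key
  -- |h t - h π| ≤ K (π - t)^2 on [0, π]
  have hb0 : ∀ t ∈ Icc (0:ℝ) π, |h t - h π| ≤ K * (π - t) ^ 2 := by
    intro t ht
    have key := norm_image_sub_le_of_norm_deriv_le_segment'
      (f := h) (f' := h1) (a := t) (b := π) (C := K * (π - t))
      (fun x hx => (hdiff x).hasDerivAt.hasDerivWithinAt)
      (fun x hx => by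
        have hbx := hb1 x ⟨le_trans ht.1 hx.1, le_of_lt hx.2⟩
        rw [Real.norm_eq_abs]
        nlinarith [hx.1, hKnn])
      π ⟨ht.2, le_refl _⟩
    rw [Real.norm_eq_abs, abs_sub_comm] at key
    calc |h t - h π| ≤ K * (π - t) * (π - t) := key
      _ = K * (π - t) ^ 2 := by ring
  -- 1 + cos t ≥ (2/π²)(π-t)² on [0, π]
  have hcosb : ∀ t ∈ Icc (0:ℝ) π, 2 / π ^ 2 * (π - t) ^ 2 ≤ 1 + Real.cos t := by
    intro t ht
    have habs : |π - t| ≤ π := by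
      rw [abs_of_nonneg (by linarith [ht.2])]; linarith [ht.1]
    have := Real.cos_le_one_sub_mul_cos_sq habs
    rw [Real.cos_pi_sub] at this
    linarith
  have hπ := Real.pi_pos
  set c : ℝ := 2 / π ^ 2 with hc
  have hcpos : 0 < c := by positivity
  refine ⟨min ((1/2) / (|h π| + 1)) ((c/4) / (K + 1)), lt_min (by positivity) (by positivity),
    fun ε hε t ht => ?_⟩
  have hε1 : |ε| * |h π| ≤ 1/2 := by
    have h1 : |ε| < (1/2) / (|h π| + 1) := lt_of_lt_of_le hε (min_le_left _ _)
    have h2 : 0 ≤ |h π| := abs_nonneg _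
    rw [lt_div_iff₀ (by positivity)] at h1
    nlinarith [abs_nonneg ε]
  have hε2 : |ε| * K ≤ c / 4 := by
    have h1 : |ε| < (c/4) / (K + 1) := lt_of_lt_of_le hε (min_le_right _ _)
    rw [lt_div_iff₀ (by positivity)] at h1
    nlinarith [abs_nonneg ε]
  set A := 1 + Real.cos t with hA
  have hAnn : 0 ≤ A := by have := Real.neg_one_le_cos t; simp [hA]; linarith
  have hAb : c * (π - t) ^ 2 ≤ A := hcosb t ht
  -- the error term
  have herr : |ε * (h t - h π) * Real.cos t| ≤ A / 4 := by
    have e0 : |ε * (h t - h π) * Real.cos t| = |ε| * |h t - h π| * |Real.cos t| := by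
      rw [abs_mul, abs_mul]
    have e1 : |ε| * |h t - h π| ≤ |ε| * (K * (π - t)^2) :=
      mul_le_mul_of_nonneg_left (hb0 t ht) (abs_nonneg ε)
    have e3 : (|ε| * K) * (π - t)^2 ≤ (c/4) * (π - t)^2 :=
      mul_le_mul_of_nonneg_right hε2 (sq_nonneg _)
    have e4 : (c/4) * (π - t)^2 ≤ A/4 := by linarith [hAb]
    rw [e0]
    nlinarith [e1, e3, e4, Real.abs_cos_le_one t, abs_nonneg ε,
      mul_nonneg (abs_nonneg ε) (abs_nonneg (h t - h π))]
  have hcoeff : 1/2 ≤ 1 + ε * h π := by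
    have := abs_mul ε (h π) ▸ neg_abs_le (ε * h π)
    nlinarith [neg_abs_le (ε * h π), abs_mul ε (h π), hε1]
  have hrewrite : (1 + ε * h π) + (1 + ε * h t) * Real.cos t
      = (1 + ε * h π) * A + ε * (h t - h π) * Real.cos t := by
    simp [hA]; ring
  have hlow : A / 4 ≤ (1 + ε * h π) + (1 + ε * h t) * Real.cos t := by
    rw [hrewrite]
    have := neg_abs_le (ε * (h t - h π) * Real.cos t)
    nlinarith
  constructor
  · linarith
  · intro heq
    rw [heq] at hlow
    have hA0 : A = 0 := le_antisymm (by linarith) hAnn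
    have : Real.cos t = -1 := by simp [hA] at hA0; linarith
    have : Real.cos t = Real.cos π := by rw [this, Real.cos_pi]
    exact Real.injOn_cos ht ⟨le_of_lt hπ, le_refl _⟩ this
end

section
/- Let g be C^∞, even, 2π-periodic, positive, and γ(t) = (g(t)·sin t, g(π) + g(t)·cos t). Then the function r(t) = |γ(t)| is differentiable at t = π (from the left) with left derivative r'(π) = −g(π) < 0. -/
open Real Filter Topology

/-- `|γ(t)|` where `γ(t) = (g(t)·sin t, g(π) + g(t)·cos t)` (Euclidean norm in the plane). -/
noncomputable def profileDist (g : ℝ → ℝ) (t : ℝ) : ℝ :=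
  Real.sqrt ((g t * Real.sin t) ^ 2 + (g Real.pi + g t * Real.cos t) ^ 2)

theorem spheres_fill_stmt5 (g : ℝ → ℝ) (hsmooth : ContDiff ℝ (⊤ : ℕ∞) g)
    (heven : ∀ t, g (-t) = g t) (hper : ∀ t, g (t + 2 * π) = g t)
    (hpos : ∀ t, 0 < g t) :
    HasDerivWithinAt (profileDist g) (-(g π)) (Set.Iic π) π ∧ -(g π) < 0 := by
  have hdiff : Differentiable ℝ g := hsmooth.differentiable (by simp)
  have hd : HasDerivAt g (deriv g π) π := (hdiff π).hasDerivAt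
  have hsym : ∀ s, g (π + s) = g (π - s) := by
    intro s
    have h1 := hper (s - π)
    have h2 := heven (π - s)
    rw [show s - π + 2 * π = π + s by ring] at h1
    rw [show -(π - s) = s - π by ring] at h2
    exact h1.trans h2
  have hderiv0 : deriv g π = 0 := by
    have hd0 : HasDerivAt g (deriv g π) (π + (0:ℝ)) := by simpa using hd
    have hd0' : HasDerivAt g (deriv g π) (π - (0:ℝ)) := by simpa using hd
    have hA : HasDerivAt (fun s => g (π + s)) (deriv g π) 0 := by
      have := hd0.comp 0 ((hasDerivAt_id (0:ℝ)).const_add π)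
      simpa [Function.comp_def] using this
    have hB : HasDerivAt (fun s => g (π - s)) (-(deriv g π)) 0 := by
      have := hd0'.comp 0 ((hasDerivAt_id (0:ℝ)).neg.const_add π)
      simpa [sub_eq_add_neg, Function.comp_def] using this
    have heq : (fun s => g (π + s)) = fun s => g (π - s) := funext hsym
    have := hA.unique (heq.symm ▸ hB)
    linarith
  have hA' : HasDerivAt (fun t => g t * Real.sin t) (-(g π)) π := by
    have := hd.mul (Real.hasDerivAt_sin π)
    rw [hderiv0] at this
    simpa [Real.sin_pi, Real.cos_pi, Pi.mul_def] using this
  have hB' : HasDerivAt (fun t => g π + g t * Real.cos t) 0 π := by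
    have := (hd.mul (Real.hasDerivAt_cos π)).const_add (g π)
    rw [hderiv0] at this
    simpa [Real.sin_pi, Real.cos_pi] using this
  set γ : ℝ → ℂ := fun t => (g t * Real.sin t : ℝ) + (g π + g t * Real.cos t : ℝ) * Complex.I
    with hγdef
  have hγ : HasDerivAt γ (-(g π) : ℂ) π := by
    have h1 := hA'.ofReal_comp
    have h2 := hB'.ofReal_comp.mul_const Complex.I
    have := h1.add h2
    simpa [hγdef, Pi.add_def] using this
  have hγπ : γ π = 0 := by
    simp only [hγdef, Real.sin_pi, Real.cos_pi]
    push_cast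
    ring
  have hr : ∀ t, profileDist g t = ‖γ t‖ := by
    intro t
    rw [profileDist, hγdef]
    rw [Complex.norm_def]
    norm_cast
    rw [Complex.normSq_add_mul_I]
  constructor
  · rw [hasDerivWithinAt_iff_tendsto_slope]
    have hslope : Tendsto (slope γ π) (𝓝[≠] π) (𝓝 (-(g π) : ℂ)) :=
      hasDerivAt_iff_tendsto_slope.1 hγ
    have hsub : 𝓝[Set.Iic π \ {π}] π ≤ 𝓝[≠] π :=
      nhdsWithin_mono π (fun t ht => ht.2)
    have h1 : Tendsto (fun t => -‖slope γ π t‖) (𝓝[Set.Iic π \ {π}] π)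
        (𝓝 (-(g π))) := by
      have := (hslope.mono_left hsub).norm.neg
      simpa [abs_of_pos (hpos π)] using this
    refine h1.congr' ?_
    filter_upwards [self_mem_nhdsWithin] with t ht
    obtain ⟨htle, htne⟩ := ht
    have htlt : t < π := lt_of_le_of_ne htle htne
    have hne : t - π ≠ 0 := sub_ne_zero.2 (ne_of_lt htlt)
    have habs : |t - π| = -(t - π) := abs_of_neg (sub_neg.2 htlt)
    rw [slope_def_field, slope]
    rw [hγπ, hr, hr π, hγπ]
    simp only [vsub_eq_sub, sub_zero, map_zero, norm_zero, smul_eq_mul]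
    rw [norm_smul]
    rw [norm_inv, Real.norm_eq_abs, habs, div_eq_inv_mul]
    have hπt : π - t ≠ 0 := sub_ne_zero.mpr htlt.ne'
    field_simp [hπt]
  · exact neg_lt_zero.mpr (hpos π)
end

section
/- Let g be C^∞, even, 2π-periodic, positive, with g(0)g''(0) + g(π)g''(0) − g(0)g(π) < 0, and let γ(t) = (g(t)·sin t, g(π) + g(t)·cos t). Then the function t ↦ |γ(t)| has the Taylor expansion |γ|'(t) = [ (g(0)g''(0) + g(π)g''(0) − g(0)g(π)) / (g(0) + g(π)) ]·t + o(t) as t → 0⁺; in particular |γ| is strictly decreasing in a right neighborhood of 0. -/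
open Real Asymptotics

theorem spheres_fill_stmt6 (g : ℝ → ℝ) (hsmooth : ContDiff ℝ (⊤ : ℕ∞) g)
    (heven : ∀ t, g (-t) = g t) (hper : ∀ t, g (t + 2 * π) = g t)
    (hpos : ∀ t, 0 < g t)
    (hneg : g 0 * iteratedDeriv 2 g 0 + g π * iteratedDeriv 2 g 0 - g 0 * g π < 0) :
    (fun t => deriv (profileDist g) t -
        (g 0 * iteratedDeriv 2 g 0 + g π * iteratedDeriv 2 g 0 - g 0 * g π) / (g 0 + g π) * t)
      =o[nhdsWithin 0 (Set.Ioi 0)] (fun t => t) ∧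
    ∃ δ > 0, StrictAntiOn (profileDist g) (Set.Icc 0 δ) := by
  have ha : (0:ℝ) < g 0 := hpos 0
  have hb : (0:ℝ) < g π := hpos π
  have hab : (0:ℝ) < g 0 + g π := by linarith
  set a := g 0 with ha_def
  set b := g π with hb_def
  set c2 := iteratedDeriv 2 g 0 with hc2_def
  set c := (a * c2 + b * c2 - a * b) / (a + b) with hc_def
  have hcneg : c < 0 := div_neg_of_neg_of_pos hneg hab
  have hgd : Differentiable ℝ g := hsmooth.differentiable (by simp)
  have hinf : ContDiff ℝ ((⊤ : ℕ∞) : WithTop ℕ∞) g := hsmooth.of_le (by simp)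
  have hgd2 : Differentiable ℝ (deriv g) :=
    (contDiff_infty_iff_deriv.mp hinf).2.differentiable (by simp)
  -- deriv g 0 = 0 by evenness
  have hg'0 : deriv g 0 = 0 := by
    have h1 : HasDerivAt g (deriv g 0) 0 := (hgd 0).hasDerivAt
    have h1' : HasDerivAt g (deriv g 0) (-0) := by simpa using h1
    have h2 : HasDerivAt (fun t => g (-t)) (deriv g 0 * (-1)) 0 :=
      h1'.comp 0 (hasDerivAt_neg 0)
    have h3 : HasDerivAt g (deriv g 0 * (-1)) 0 := by
      have : (fun t => g (-t)) = g := funext heven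
      rwa [this] at h2
    have := h3.unique h1
    linarith
  have hc2' : HasDerivAt (deriv g) c2 0 := by
    have h := (hgd2 0).hasDerivAt
    have : deriv (deriv g) 0 = c2 := by
      rw [hc2_def, iteratedDeriv_succ, iteratedDeriv_one]
    rwa [this] at h
  -- the squared distance, simplified
  set F : ℝ → ℝ := fun t => g t ^ 2 + 2 * b * (g t * Real.cos t) + b ^ 2 with hF_def
  set F' : ℝ → ℝ := fun t =>
    2 * g t * deriv g t + 2 * b * (deriv g t * Real.cos t - g t * Real.sin t) with hF'_def
  have hD_eq : profileDist g = fun t => Real.sqrt (F t) := by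
    funext t
    unfold profileDist
    rw [hF_def]
    congr 1
    have h := Real.sin_sq_add_cos_sq t
    linear_combination (g t ^ 2) * h
  have hF : ∀ t, HasDerivAt F (F' t) t := by
    intro t
    have h1 := (hgd t).hasDerivAt
    have hc := Real.hasDerivAt_cos t
    have h2 := ((h1.pow 2).add (((h1.mul hc).const_mul (2 * b)))).add_const (b ^ 2)
    refine h2.congr_deriv (Eq.symm ?_)
    simp only [hF'_def]
    push_cast
    ring
  have hF0 : F 0 = (a + b) ^ 2 := by simp [hF_def]; ring
  have hF0pos : 0 < F 0 := by rw [hF0]; positivity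
  have hF'0 : F' 0 = 0 := by simp [hF'_def, hg'0]
  have hsqrtF0 : Real.sqrt (F 0) = a + b := by
    rw [hF0]; exact Real.sqrt_sq hab.le
  have hDeriv : ∀ t, 0 < F t →
      HasDerivAt (profileDist g) (F' t / (2 * Real.sqrt (F t))) t := by
    intro t ht
    rw [hD_eq]
    have h := (Real.hasDerivAt_sqrt (ne_of_gt ht)).comp t (hF t)
    refine h.congr_deriv (Eq.symm ?_)
    field_simp
  have hFpos : ∀ᶠ t in nhds (0:ℝ), 0 < F t := by
    have : ∀ᶠ t in nhds (0:ℝ), F t ∈ Set.Ioi (0:ℝ) :=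
      (hF 0).continuousAt.preimage_mem_nhds (Ioi_mem_nhds hF0pos)
    exact this
  have hderiv_eq : (fun t => F' t / (2 * Real.sqrt (F t))) =ᶠ[nhds (0:ℝ)]
      deriv (profileDist g) :=
    hFpos.mono fun t ht => ((hDeriv t ht).deriv).symm
  -- HasDerivAt of the explicit formula at 0
  have hG : HasDerivAt (fun t => F' t / (2 * Real.sqrt (F t))) c 0 := by
    have h1 : HasDerivAt g (deriv g 0) 0 := (hgd 0).hasDerivAt
    have hs := Real.hasDerivAt_sin 0
    have hc' := Real.hasDerivAt_cos 0
    have hnum : HasDerivAt F'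
        ((2 * deriv g 0 * deriv g 0 + 2 * g 0 * c2) +
          2 * b * ((c2 * Real.cos 0 + deriv g 0 * (-Real.sin 0)) -
            (deriv g 0 * Real.sin 0 + g 0 * Real.cos 0))) 0 := by
      have hA := (h1.const_mul 2).mul hc2'
      have hB := ((hc2'.mul hc').sub (h1.mul hs)).const_mul (2 * b)
      have h := hA.add hB
      exact h
    have hden : HasDerivAt (fun t => 2 * Real.sqrt (F t))
        (2 * (1 / (2 * Real.sqrt (F 0)) * F' 0)) 0 := by
      exact ((Real.hasDerivAt_sqrt (ne_of_gt hF0pos)).comp 0 (hF 0)).const_mul 2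
    have hden0 : 2 * Real.sqrt (F 0) ≠ 0 := by
      rw [hsqrtF0]; positivity
    have h := hnum.div hden hden0
    refine h.congr_deriv (Eq.symm ?_)
    rw [hc_def, hF'0, hsqrtF0]
    simp only [hg'0, Real.sin_zero, Real.cos_zero]
    field_simp
    ring
  have h1main : HasDerivAt (deriv (profileDist g)) c 0 :=
    hG.congr_of_eventuallyEq hderiv_eq.symm
  have hD'0 : deriv (profileDist g) 0 = 0 := by
    rw [(hDeriv 0 hF0pos).deriv, hF'0, zero_div]
  constructor
  · have h := hasDerivAt_iff_isLittleO.mp h1main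
    simp only [hD'0, sub_zero, smul_eq_mul] at h
    have h' : (fun t => deriv (profileDist g) t - c * t) =o[nhds (0:ℝ)] (fun t => t) := by
      simpa [mul_comm] using h
    exact h'.mono nhdsWithin_le_nhds
  · -- deriv negative on a right neighborhood
    have hsl : Filter.Tendsto (slope (deriv (profileDist g)) 0)
        (nhdsWithin 0 {(0:ℝ)}ᶜ) (nhds c) := hasDerivAt_iff_tendsto_slope.mp h1main
    have h2 : ∀ᶠ t in nhdsWithin 0 {(0:ℝ)}ᶜ,
        slope (deriv (profileDist g)) 0 t < 0 := hsl.eventually_lt_const hcneg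
    have h3 : ∀ᶠ t in nhdsWithin (0:ℝ) (Set.Ioi 0), deriv (profileDist g) t < 0 := by
      have hmono : nhdsWithin (0:ℝ) (Set.Ioi 0) ≤ nhdsWithin 0 {(0:ℝ)}ᶜ :=
        nhdsWithin_mono 0 (fun x hx => ne_of_gt hx)
      filter_upwards [h2.filter_mono hmono, self_mem_nhdsWithin] with t ht ht0
      have ht0' : (0:ℝ) < t := ht0
      have hts : slope (deriv (profileDist g)) 0 t = deriv (profileDist g) t / t := by
        simp [slope_def_field, hD'0]
      rw [hts] at ht
      have hm := mul_neg_of_neg_of_pos ht ht0'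
      rwa [div_mul_cancel₀ _ (ne_of_gt ht0')] at hm
    obtain ⟨u, hu, hsub⟩ := mem_nhdsGT_iff_exists_Ioc_subset.mp h3
    refine ⟨u, hu, ?_⟩
    apply strictAntiOn_of_deriv_neg (convex_Icc 0 u)
    · have hcont : Continuous (profileDist g) := by
        unfold profileDist
        have hgc : Continuous g := hsmooth.continuous
        fun_prop
      exact hcont.continuousOn
    · intro x hx
      rw [interior_Icc] at hx
      exact hsub ⟨hx.1, hx.2.le⟩
end

section
/- For every even, 2π-periodic C^∞ function h there exists ε₀ > 0 such that for all ε ∈ (−ε₀, ε₀), setting g_ε = 1 + ε·h and γ_ε(t) = (g_ε(t)·sin t, g_ε(π) + g_ε(t)·cos t), the map t ↦ |γ_ε(t)| is strictly decreasing on [0, π]. -/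
open Real Set

set_option maxHeartbeats 1000000 in
theorem spheres_fill_stmt7 (h : ℝ → ℝ) (hsmooth : ContDiff ℝ (⊤ : ℕ∞) h)
    (heven : ∀ t, h (-t) = h t) (hper : ∀ t, h (t + 2 * π) = h t) :
    ∃ ε₀ > 0, ∀ ε : ℝ, |ε| < ε₀ →
      StrictAntiOn (fun t : ℝ =>
          Real.sqrt (((1 + ε * h t) * Real.sin t) ^ 2 +
            ((1 + ε * h π) + (1 + ε * h t) * Real.cos t) ^ 2))
        (Set.Icc 0 π) := by
  have hdh : Differentiable ℝ h := hsmooth.differentiable (by simp)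
  have h8 : ContDiff ℝ (⊤ : ℕ∞) h := hsmooth.of_le (by simp)
  have hd1 : ContDiff ℝ (⊤ : ℕ∞) (deriv h) := (contDiff_infty_iff_deriv.mp h8).2
  have hdh' : Differentiable ℝ (deriv h) := hd1.differentiable (by simp)
  -- deriv h vanishes at 0
  have h'0 : deriv h 0 = 0 := by
    have e : (fun s : ℝ => h (-s)) = h := funext heven
    have := congrArg (fun f : ℝ → ℝ => deriv f 0) e
    simp only [deriv_comp_neg, neg_zero] at this
    linarith
  -- deriv h vanishes at π
  have h'π : deriv h π = 0 := by
    have key : (fun s : ℝ => h (π + s)) = fun s => h (π - s) := by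
      funext s
      have h1 : h (π - s) = h (s - π) := by
        have := heven (s - π); rw [neg_sub] at this; exact this.symm ▸ rfl
      have h2 : h (s - π + 2 * π) = h (s - π) := hper _
      have h3 : s - π + 2 * π = π + s := by ring
      rw [h1, ← h2, h3]
    have := congrArg (fun f : ℝ → ℝ => deriv f 0) key
    simp only [deriv_comp_const_add, deriv_comp_const_sub, add_zero, sub_zero] at this
    linarith
  -- bounds on compact interval
  obtain ⟨Bh0, hBh0⟩ := (isCompact_Icc (a := (0:ℝ)) (b := π)).exists_bound_of_continuousOn
    hsmooth.continuous.continuousOn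
  obtain ⟨M0, hM0⟩ := (isCompact_Icc (a := (0:ℝ)) (b := π)).exists_bound_of_continuousOn
    ((contDiff_infty_iff_deriv.mp hd1).2.continuous.continuousOn)
  set Bh := max Bh0 0 with hBhdef
  set M := max M0 0 with hMdef
  have hBnn : (0:ℝ) ≤ Bh := le_max_right _ _
  have hMnn : (0:ℝ) ≤ M := le_max_right _ _
  have hBh : ∀ t ∈ Icc (0:ℝ) π, |h t| ≤ Bh := fun t ht =>
    le_trans (hBh0 t ht) (le_max_left _ _)
  have hM : ∀ t ∈ Icc (0:ℝ) π, |deriv (deriv h) t| ≤ M := fun t ht =>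
    le_trans (hM0 t ht) (le_max_left _ _)
  have hpi := Real.pi_pos
  -- mean value bounds on deriv h
  have mvt : ∀ x ∈ Icc (0:ℝ) π, ∀ y ∈ Icc (0:ℝ) π,
      |deriv h y - deriv h x| ≤ M * |y - x| := by
    intro x hx y hy
    have := Convex.norm_image_sub_le_of_norm_deriv_le
      (f := deriv h) (s := Icc (0:ℝ) π)
      (fun z _ => hdh' z) hM (convex_Icc 0 π) hx hy
    simpa using this
  set C := M * (π / 2) with hCdef
  have hCnn : (0:ℝ) ≤ C := by positivity
  have hsinb : ∀ t ∈ Icc (0:ℝ) π, |deriv h t| ≤ C * Real.sin t := by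
    intro t ht
    rcases le_total t (π / 2) with hle | hle
    · have hj : 2 / π * t ≤ Real.sin t := Real.mul_le_sin ht.1 hle
      have h1 : |deriv h t| ≤ M * t := by
        have := mvt 0 ⟨le_rfl, le_of_lt Real.pi_pos⟩ t ht
        simpa [h'0, abs_of_nonneg ht.1] using this
      have : M * t ≤ C * Real.sin t := by
        have h2 := mul_le_mul_of_nonneg_left hj (by positivity : (0:ℝ) ≤ M * (π/2))
        have e : M * (π/2) * (2/π * t) = M * t := by
          field_simp
        rw [hCdef]; linarith
      linarith
    · have hnn : 0 ≤ π - t := by linarith [ht.2]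
      have hj : 2 / π * (π - t) ≤ Real.sin (π - t) :=
        Real.mul_le_sin hnn (by linarith)
      rw [Real.sin_pi_sub] at hj
      have h1 : |deriv h t| ≤ M * (π - t) := by
        have := mvt π ⟨le_of_lt Real.pi_pos, le_rfl⟩ t ht
        simpa [h'π, abs_of_nonpos (by linarith [ht.2] : t - π ≤ 0)] using this
      have : M * (π - t) ≤ C * Real.sin t := by
        have h2 := mul_le_mul_of_nonneg_left hj (by positivity : (0:ℝ) ≤ M * (π/2))
        have e : M * (π/2) * (2/π * (π - t)) = M * (π - t) := by
          field_simp
        rw [hCdef]; linarith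
      linarith
  refine ⟨min (1 / (2 * (Bh + 1))) (1 / (12 * (C + 1))), by positivity, ?_⟩
  intro ε hε
  have hεB : |ε| * (Bh + 1) < 1 / 2 := by
    have h1 : |ε| < 1 / (2 * (Bh + 1)) := lt_of_lt_of_le hε (min_le_left _ _)
    rw [lt_div_iff₀ (by positivity)] at h1
    nlinarith
  have hεC : |ε| * (C + 1) < 1 / 12 := by
    have h1 : |ε| < 1 / (12 * (C + 1)) := lt_of_lt_of_le hε (min_le_right _ _)
    rw [lt_div_iff₀ (by positivity)] at h1
    nlinarith
  have hεnn : (0:ℝ) ≤ |ε| := abs_nonneg ε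
  -- bounds on g
  have hg : ∀ t ∈ Icc (0:ℝ) π, 1/2 < 1 + ε * h t ∧ 1 + ε * h t < 3/2 := by
    intro t ht
    have h1 : |ε * h t| ≤ |ε| * Bh := by
      rw [abs_mul]; exact mul_le_mul_of_nonneg_left (hBh t ht) hεnn
    have h2 : |ε| * Bh < 1/2 := by nlinarith
    have := abs_lt.mp (lt_of_le_of_lt h1 h2)
    constructor <;> linarith [this.1, this.2]
  have hπmem : π ∈ Icc (0:ℝ) π := ⟨le_of_lt hpi, le_rfl⟩
  -- the squared function and its derivative
  set F : ℝ → ℝ := fun t => ((1 + ε * h t) * Real.sin t) ^ 2 +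
      ((1 + ε * h π) + (1 + ε * h t) * Real.cos t) ^ 2 with hFdef
  set D : ℝ → ℝ := fun t =>
      2 * ((1 + ε * h t) * Real.sin t) ^ 1 *
        ((ε * deriv h t) * Real.sin t + (1 + ε * h t) * Real.cos t) +
      2 * ((1 + ε * h π) + (1 + ε * h t) * Real.cos t) ^ 1 *
        ((ε * deriv h t) * Real.cos t + (1 + ε * h t) * (-Real.sin t)) with hDdef
  have hF' : ∀ t : ℝ, HasDerivAt F (D t) t := by
    intro t
    have hg' : HasDerivAt (fun t => 1 + ε * h t) (ε * deriv h t) t :=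
      (((hdh t).hasDerivAt).const_mul ε).const_add 1
    have hA : HasDerivAt (fun t => (1 + ε * h t) * Real.sin t)
        ((ε * deriv h t) * Real.sin t + (1 + ε * h t) * Real.cos t) t :=
      hg'.mul (Real.hasDerivAt_sin t)
    have hB : HasDerivAt (fun t => (1 + ε * h π) + (1 + ε * h t) * Real.cos t)
        ((ε * deriv h t) * Real.cos t + (1 + ε * h t) * (-Real.sin t)) t :=
      (hg'.mul (Real.hasDerivAt_cos t)).const_add (1 + ε * h π)
    exact (hA.pow 2).add (hB.pow 2)
  -- derivative is negative on the interior
  have hDneg : ∀ t ∈ Ioo (0:ℝ) π, D t < 0 := by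
    intro t ht
    have htI : t ∈ Icc (0:ℝ) π := ⟨le_of_lt ht.1, le_of_lt ht.2⟩
    have hs : 0 < Real.sin t := Real.sin_pos_of_pos_of_lt_pi ht.1 ht.2
    have hc : |Real.cos t| ≤ 1 := Real.abs_cos_le_one t
    have pyth := Real.sin_sq_add_cos_sq t
    obtain ⟨hg1, hg2⟩ := hg t htI
    obtain ⟨hgπ1, hgπ2⟩ := hg π hπmem
    have hDsimp : D t = 2 * (ε * deriv h t) *
        ((1 + ε * h t) + (1 + ε * h π) * Real.cos t)
        - 2 * (1 + ε * h π) * (1 + ε * h t) * Real.sin t := by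
      simp only [hDdef, pow_one]
      linear_combination (2 * (1 + ε * h t) * (ε * deriv h t)) * pyth
    have hhd : |deriv h t| ≤ C * Real.sin t := hsinb t htI
    have habs1 : |(1 + ε * h t) + (1 + ε * h π) * Real.cos t| ≤ 3 := by
      have h1 : |1 + ε * h t| ≤ 3/2 := abs_le.mpr ⟨by linarith, le_of_lt hg2⟩
      have h2 : |(1 + ε * h π) * Real.cos t| ≤ 3/2 := by
        rw [abs_mul]
        calc |1 + ε * h π| * |Real.cos t| ≤ (3/2) * 1 := by
              apply mul_le_mul _ hc (abs_nonneg _) (by norm_num)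
              exact abs_le.mpr ⟨by linarith, le_of_lt hgπ2⟩
          _ = 3/2 := by ring
      calc |(1 + ε * h t) + (1 + ε * h π) * Real.cos t|
          ≤ |1 + ε * h t| + |(1 + ε * h π) * Real.cos t| := abs_add_le _ _
        _ ≤ 3 := by linarith
    have hterm : 2 * (ε * deriv h t) *
        ((1 + ε * h t) + (1 + ε * h π) * Real.cos t) ≤
        6 * (|ε| * (C * Real.sin t)) := by
      calc 2 * (ε * deriv h t) * ((1 + ε * h t) + (1 + ε * h π) * Real.cos t)
          ≤ |2 * (ε * deriv h t) * ((1 + ε * h t) + (1 + ε * h π) * Real.cos t)| :=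
            le_abs_self _
        _ = 2 * (|ε| * |deriv h t|) *
            |(1 + ε * h t) + (1 + ε * h π) * Real.cos t| := by
            rw [abs_mul, abs_mul, abs_mul]; norm_num
        _ ≤ 2 * (|ε| * (C * Real.sin t)) * 3 := by
            apply mul_le_mul _ habs1 (abs_nonneg _)
            · positivity
            · apply mul_le_mul_of_nonneg_left _ (by norm_num)
              exact mul_le_mul_of_nonneg_left hhd hεnn
        _ = 6 * (|ε| * (C * Real.sin t)) := by ring
    have hlow : (1/2) * Real.sin t ≤
        2 * (1 + ε * h π) * (1 + ε * h t) * Real.sin t := by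
      have h12 : (1/2:ℝ) ≤ 2 * (1 + ε * h π) * (1 + ε * h t) := by nlinarith
      have := mul_le_mul_of_nonneg_right h12 hs.le
      linarith
    have hsmall : 6 * (|ε| * (C * Real.sin t)) < (1/2) * Real.sin t := by
      have hεC' : |ε| * C < 1/12 := by nlinarith
      have e : 6 * (|ε| * (C * Real.sin t)) = 6 * (|ε| * C * Real.sin t) := by ring
      rw [e]
      have := mul_lt_mul_of_pos_right hεC' hs
      linarith
    rw [hDsimp]
    linarith [hterm, hlow, hsmall]
  -- F is strictly decreasing
  have hFanti : StrictAntiOn F (Icc 0 π) := by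
    apply strictAntiOn_of_deriv_neg (convex_Icc 0 π)
    · refine Continuous.continuousOn ?_
      rw [hFdef]
      exact (((continuous_const.add (continuous_const.mul
        hsmooth.continuous)).mul Real.continuous_sin).pow 2).add
        ((continuous_const.add ((continuous_const.add (continuous_const.mul
        hsmooth.continuous)).mul Real.continuous_cos)).pow 2)
    · rw [interior_Icc]
      intro t ht
      rw [(hF' t).deriv]
      exact hDneg t ht
  intro x hx y hy hxy
  have hFnn : 0 ≤ F y := by rw [hFdef]; positivity
  exact Real.sqrt_lt_sqrt hFnn (hFanti hx hy hxy)
end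

section
/- For every even, 2π-periodic C^∞ function h there exists ε₀ > 0 such that for all ε with |ε| < ε₀, setting g_ε = 1 + ε·h, one has g_ε(t)·sin t − g_ε'(t)·cos t > 0 for all t ∈ (0, π). -/
open Real
open scoped ContDiff

theorem spheres_fill_stmt11 (h : ℝ → ℝ) (hsmooth : ContDiff ℝ (⊤ : ℕ∞) h)
    (heven : ∀ t, h (-t) = h t) (hper : ∀ t, h (t + 2 * π) = h t) :
    ∃ ε₀ > 0, ∀ ε : ℝ, |ε| < ε₀ → ∀ t ∈ Set.Ioo 0 π,
      0 < (1 + ε * h t) * Real.sin t - deriv (fun s => 1 + ε * h s) t * Real.cos t := by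
  have hsm : ContDiff ℝ ∞ h := hsmooth.of_le (by simp)
  have hd : Differentiable ℝ h := hsm.differentiable (by simp)
  have hd'cd : ContDiff ℝ ∞ (deriv h) := (contDiff_infty_iff_deriv.mp hsm).2
  have hd' : Differentiable ℝ (deriv h) := hd'cd.differentiable (by simp)
  have hneg : (fun x => h (-x)) = h := funext heven
  -- deriv h is odd
  have hodd : ∀ x : ℝ, deriv h (-x) = -deriv h x := by
    intro x
    have := deriv_comp_neg h x
    rw [hneg] at this
    linarith
  have hD0 : deriv h 0 = 0 := by
    have := hodd 0
    simp at this
    linarith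
  have hDpi : deriv h π = 0 := by
    have hshift : (fun t => h (t + 2 * π)) = h := funext hper
    have h1 : deriv h (-π + 2 * π) = deriv h (-π) := by
      have := deriv_comp_add_const h (2 * π) (-π)
      rw [hshift] at this
      linarith
    have h2 : deriv h (-π) = -deriv h π := hodd π
    have : (-π : ℝ) + 2 * π = π := by ring
    rw [this] at h1
    linarith [h1, h2]
  set F : ℝ → ℝ := fun t => h t * Real.sin t - deriv h t * Real.cos t with hF
  have hF0 : F 0 = 0 := by simp [hF, hD0]
  have hFpi : F π = 0 := by simp [hF, hDpi]
  have hFcd : ContDiff ℝ ∞ F :=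
    (hsm.mul Real.contDiff_sin).sub (hd'cd.mul Real.contDiff_cos)
  have hFd : Differentiable ℝ F := hFcd.differentiable (by simp)
  have hF'cont : Continuous (deriv F) :=
    ((contDiff_infty_iff_deriv.mp hFcd).2).continuous
  obtain ⟨M, hM⟩ := isCompact_Icc.exists_bound_of_continuousOn
    (s := Set.Icc (0:ℝ) π) hF'cont.continuousOn
  have hMnn : 0 ≤ M := le_trans (norm_nonneg _) (hM 0 ⟨le_refl _, le_of_lt pi_pos⟩)
  -- Lipschitz bound on [0, π]
  have hlip : ∀ x ∈ Set.Icc (0:ℝ) π, ∀ y ∈ Set.Icc (0:ℝ) π, |F y - F x| ≤ M * |y - x| := by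
    intro x hx y hy
    have := Convex.norm_image_sub_le_of_norm_deriv_le
      (f := F) (C := M) (s := Set.Icc (0:ℝ) π)
      (fun z _ => hFd z) (fun z hz => hM z hz) (convex_Icc 0 π) hx hy
    simpa [Real.norm_eq_abs] using this
  set C : ℝ := M * (π / 2) with hC
  have hCnn : 0 ≤ C := by positivity
  -- key bound |F t| ≤ C * sin t on (0, π)
  have hkey : ∀ t ∈ Set.Ioo (0:ℝ) π, |F t| ≤ C * Real.sin t := by
    intro t ht
    obtain ⟨ht0, htpi⟩ := ht
    rcases le_or_gt t (π / 2) with hle | hgt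
    · have h1 : |F t| ≤ M * t := by
        have := hlip 0 ⟨le_refl _, le_of_lt pi_pos⟩ t ⟨le_of_lt ht0, le_of_lt htpi⟩
        rw [hF0] at this
        simpa [abs_of_pos ht0] using this
      have hsin : 2 / π * t ≤ Real.sin t := Real.mul_le_sin (le_of_lt ht0) hle
      have : M * t ≤ C * Real.sin t := by
        rw [hC]
        have h2 : t ≤ π / 2 * Real.sin t := by
          have hπ : (0:ℝ) < π := pi_pos
          rw [div_mul_eq_mul_div, div_le_iff₀ hπ] at hsin
          nlinarith
        nlinarith
      linarith
    · have h1 : |F t| ≤ M * (π - t) := by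
        have := hlip π ⟨le_of_lt pi_pos, le_refl _⟩ t ⟨le_of_lt ht0, le_of_lt htpi⟩
        rw [hFpi] at this
        have habs : |t - π| = π - t := by
          rw [abs_of_nonpos (by linarith)]; ring
        rw [habs] at this
        simpa using this
      have hsin : 2 / π * (π - t) ≤ Real.sin (π - t) :=
        Real.mul_le_sin (by linarith) (by linarith)
      rw [Real.sin_pi_sub] at hsin
      have : M * (π - t) ≤ C * Real.sin t := by
        rw [hC]
        have hπ : (0:ℝ) < π := pi_pos
        have h2 : π - t ≤ π / 2 * Real.sin t := by
          rw [div_mul_eq_mul_div, div_le_iff₀ hπ] at hsin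
          nlinarith
        nlinarith
      linarith
  refine ⟨1 / (C + 1), by positivity, fun ε hε t ht => ?_⟩
  obtain ⟨ht0, htpi⟩ := ht
  have hsinpos : 0 < Real.sin t := Real.sin_pos_of_pos_of_lt_pi ht0 htpi
  have hderiv : deriv (fun s => 1 + ε * h s) t = ε * deriv h t := by
    rw [deriv_const_add]
    exact deriv_const_mul ε (hd t)
  rw [hderiv]
  have hexpand : (1 + ε * h t) * Real.sin t - ε * deriv h t * Real.cos t
      = Real.sin t + ε * F t := by
    simp only [hF]; ring
  rw [hexpand]
  have hεC : |ε| * C < 1 := by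
    have h1 : |ε| * (C + 1) < 1 := by
      have := mul_lt_mul_of_pos_right hε (show (0:ℝ) < C + 1 by positivity)
      rwa [div_mul_cancel₀ 1 (by positivity : (C:ℝ) + 1 ≠ 0)] at this
    nlinarith [abs_nonneg ε]
  have h2 : |ε * F t| ≤ |ε| * (C * Real.sin t) := by
    rw [abs_mul]
    exact mul_le_mul_of_nonneg_left (hkey t ⟨ht0, htpi⟩) (abs_nonneg ε)
  have h3 : -(ε * F t) ≤ |ε| * C * Real.sin t := by
    calc -(ε * F t) ≤ |ε * F t| := neg_le_abs _
      _ ≤ |ε| * (C * Real.sin t) := h2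
      _ = |ε| * C * Real.sin t := by ring
  nlinarith [hsinpos]
end

section
/- Let g : ℝ → (0,∞) be C^∞ and consider the hypersurface of revolution S_g in ℝ^{n+1} parametrized by x(θ₁,...,θₙ) = g(θₙ)·σ(θ₁,...,θₙ). The principal curvatures of S_g at x(θ₁,...,θₙ) (with respect to the outward normal) are K₁ = ... = K_{n−1} = (g − (cos θₙ/sin θₙ)·g') / (g·√(g² + (g')²)) and Kₙ = (g² + 2(g')² − g·g'') / (g² + (g')²)^{3/2}, with g and its derivatives evaluated at θₙ ∈ (0, π). -/
open Real

/-- The standard hyperspherical parametrization of the unit sphere `Sⁿ ⊂ ℝ^{n+1}`: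
`σ = (sin θ₁ ⋯ sin θₙ, cos θ₁ sin θ₂ ⋯ sin θₙ, …, cos θ_{n-1} sin θₙ, cos θₙ)`. -/
noncomputable def hsph (n : ℕ) (θ : Fin n → ℝ) : EuclideanSpace ℝ (Fin (n + 1)) :=
  (WithLp.equiv 2 (Fin (n + 1) → ℝ)).symm fun i =>
    if h : (i : ℕ) = 0 then ∏ j, Real.sin (θ j)
    else Real.cos (θ ⟨(i : ℕ) - 1, by have := i.isLt; omega⟩) *
      ∏ j ∈ Finset.univ.filter (fun j : Fin n => (i : ℕ) ≤ (j : ℕ)), Real.sin (θ j)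

/-- The Gauss map (outward unit normal field) of the hypersurface of revolution
`x(θ₁,…,θₙ) = g(θₙ)·σ(θ₁,…,θₙ)`, expressed in the parameters, namely
`N ∘ x = (g·σ − g'·∂σ/∂θₙ)/√(g² + g'²)`. -/
noncomputable def revGauss (n : ℕ) (hn : 1 ≤ n) (g : ℝ → ℝ) (φ : Fin n → ℝ) :
    EuclideanSpace ℝ (Fin (n + 1)) :=
  (Real.sqrt (g (φ ⟨n - 1, by omega⟩) ^ 2 + deriv g (φ ⟨n - 1, by omega⟩) ^ 2))⁻¹ •
    (g (φ ⟨n - 1, by omega⟩) • hsph n φ -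
      deriv g (φ ⟨n - 1, by omega⟩) • fderiv ℝ (hsph n) φ (Pi.single ⟨n - 1, by omega⟩ 1))

namespace SpheresAux

/-- The "equatorial" part of `hsph`. -/
noncomputable def Fa (n : ℕ) (hn : 1 ≤ n) (θ : Fin n → ℝ) : EuclideanSpace ℝ (Fin (n + 1)) :=
  (WithLp.equiv 2 (Fin (n + 1) → ℝ)).symm fun i =>
    if (i : ℕ) = 0 then ∏ j ∈ Finset.univ.erase (⟨n - 1, by omega⟩ : Fin n), Real.sin (θ j)
    else if (i : ℕ) = n then 0
    else Real.cos (θ ⟨(i : ℕ) - 1, by have := i.isLt; omega⟩) *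
      ∏ j ∈ (Finset.univ.filter (fun j : Fin n => (i : ℕ) ≤ (j : ℕ))).erase
        (⟨n - 1, by omega⟩ : Fin n), Real.sin (θ j)

/-- The last standard basis vector. -/
noncomputable def Ev (n : ℕ) : EuclideanSpace ℝ (Fin (n + 1)) :=
  (WithLp.equiv 2 (Fin (n + 1) → ℝ)).symm (Pi.single (⟨n, Nat.lt_succ_self n⟩ : Fin (n + 1)) 1)

theorem hsph_eq {n : ℕ} (hn : 1 ≤ n) :
    hsph n = fun θ => Real.sin (θ ⟨n - 1, by omega⟩) • Fa n hn θ +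
      Real.cos (θ ⟨n - 1, by omega⟩) • Ev n := by
  funext θ
  ext i
  show _ = (Real.sin (θ ⟨n - 1, by omega⟩) • Fa n hn θ + Real.cos (θ ⟨n - 1, by omega⟩) • Ev n) i
  unfold hsph Fa Ev
  simp only [WithLp.equiv_symm_apply, PiLp.toLp_apply, PiLp.add_apply, PiLp.smul_apply, smul_eq_mul]
  by_cases h0 : (i : ℕ) = 0
  · rw [dif_pos h0, if_pos h0]
    rw [← Finset.mul_prod_erase Finset.univ _ (Finset.mem_univ (⟨n - 1, by omega⟩ : Fin n))]
    have hne : i ≠ (⟨n, Nat.lt_succ_self n⟩ : Fin (n + 1)) := by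
      intro heq; have h' : (i : ℕ) = n := congrArg Fin.val heq; omega
    have : Pi.single (M := fun _ : Fin (n+1) => ℝ) (⟨n, Nat.lt_succ_self n⟩ : Fin (n + 1)) (1 : ℝ) i = 0 :=
      Pi.single_eq_of_ne hne 1
    rw [this]; ring
  · rw [dif_neg h0, if_neg h0]
    by_cases hN : (i : ℕ) = n
    · rw [if_pos hN]
      have h1 : (Finset.univ.filter (fun j : Fin n => (i : ℕ) ≤ (j : ℕ))) = ∅ := by
        apply Finset.filter_false_of_mem
        intro j _
        have := j.isLt; omega
      rw [h1, Finset.prod_empty]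
      have h2 : Pi.single (M := fun _ : Fin (n+1) => ℝ) (⟨n, Nat.lt_succ_self n⟩ : Fin (n + 1)) (1 : ℝ) i = 1 := by
        have : i = (⟨n, Nat.lt_succ_self n⟩ : Fin (n + 1)) := by
          apply Fin.ext; exact hN
        rw [this]; simp
      have h3 : (⟨(i : ℕ) - 1, by have := i.isLt; omega⟩ : Fin n) = ⟨n - 1, by omega⟩ := by
        apply Fin.ext; show (i:ℕ) - 1 = n - 1; omega
      rw [h2, h3]; ring
    · rw [if_neg hN]
      have hmem : (⟨n - 1, by omega⟩ : Fin n) ∈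
          Finset.univ.filter (fun j : Fin n => (i : ℕ) ≤ (j : ℕ)) := by
        simp only [Finset.mem_filter, Finset.mem_univ, true_and]
        show (i : ℕ) ≤ n - 1
        have := i.isLt; omega
      rw [← Finset.mul_prod_erase _ _ hmem]
      have hne : i ≠ (⟨n, Nat.lt_succ_self n⟩ : Fin (n + 1)) := by
        intro heq; have h' : (i : ℕ) = n := congrArg Fin.val heq; omega
      have : Pi.single (M := fun _ : Fin (n+1) => ℝ) (⟨n, Nat.lt_succ_self n⟩ : Fin (n + 1)) (1 : ℝ) i = 0 :=
        Pi.single_eq_of_ne hne 1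
      rw [this]; ring

theorem Fa_update {n : ℕ} (hn : 1 ≤ n) (θ : Fin n → ℝ) (c : ℝ) :
    Fa n hn (Function.update θ ⟨n - 1, by omega⟩ c) = Fa n hn θ := by
  unfold Fa
  congr 1
  funext i
  by_cases h0 : (i : ℕ) = 0
  · rw [if_pos h0, if_pos h0]
    apply Finset.prod_congr rfl
    intro j hj
    rw [Function.update_of_ne (Finset.ne_of_mem_erase hj)]
  · rw [if_neg h0, if_neg h0]
    by_cases hN : (i : ℕ) = n
    · rw [if_pos hN, if_pos hN]
    · rw [if_neg hN, if_neg hN]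
      have hne : (⟨(i : ℕ) - 1, by have := i.isLt; omega⟩ : Fin n) ≠ ⟨n - 1, by omega⟩ := by
        intro heq
        have h' : (i : ℕ) - 1 = n - 1 := congrArg Fin.val heq
        have := i.isLt; omega
      rw [Function.update_of_ne hne]
      congr 1
      apply Finset.prod_congr rfl
      intro j hj
      rw [Function.update_of_ne (Finset.ne_of_mem_erase hj)]

theorem Fa_diff {n : ℕ} (hn : 1 ≤ n) : Differentiable ℝ (Fa n hn) := by
  have hG : Differentiable ℝ (fun (θ : Fin n → ℝ) (i : Fin (n + 1)) =>
      if (i : ℕ) = 0 then ∏ j ∈ Finset.univ.erase (⟨n - 1, by omega⟩ : Fin n), Real.sin (θ j)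
      else if (i : ℕ) = n then 0
      else Real.cos (θ ⟨(i : ℕ) - 1, by have := i.isLt; omega⟩) *
        ∏ j ∈ (Finset.univ.filter (fun j : Fin n => (i : ℕ) ≤ (j : ℕ))).erase
          (⟨n - 1, by omega⟩ : Fin n), Real.sin (θ j)) := by
    apply differentiable_pi.mpr
    intro i
    have hev : ∀ j : Fin n, Differentiable ℝ (fun θ : Fin n → ℝ => θ j) :=
      fun j => differentiable_pi.mp differentiable_id j
    have hfac : ∀ j : Fin n, Differentiable ℝ (fun θ : Fin n → ℝ => Real.sin (θ j)) :=
      fun j => Real.differentiable_sin.comp (hev j)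
    have hcos : ∀ j : Fin n, Differentiable ℝ (fun θ : Fin n → ℝ => Real.cos (θ j)) :=
      fun j => Real.differentiable_cos.comp (hev j)
    have hprod : ∀ s : Finset (Fin n),
        Differentiable ℝ (fun θ : Fin n → ℝ => ∏ j ∈ s, Real.sin (θ j)) := by
      intro s
      induction s using Finset.induction with
      | empty => simpa using differentiable_const (1 : ℝ)
      | insert _ _ hnotmem ih =>
        simp only [Finset.prod_insert hnotmem]
        exact (hfac _).mul ih
    by_cases h0 : (i : ℕ) = 0
    · simp only [if_pos h0]
      exact hprod _
    · simp only [if_neg h0]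
      by_cases hN : (i : ℕ) = n
      · simp only [if_pos hN]
        exact differentiable_const 0
      · simp only [if_neg hN]
        exact (hcos _).mul (hprod _)
  exact ((PiLp.continuousLinearEquiv 2 ℝ (fun _ : Fin (n + 1) => ℝ)).symm.differentiable).comp hG

theorem fderiv_dir_zero {n : ℕ} {M : Type*} [NormedAddCommGroup M] [NormedSpace ℝ M]
    (f : (Fin n → ℝ) → M) (θ : Fin n → ℝ) (i : Fin n)
    (hf : DifferentiableAt ℝ f θ) (hinv : ∀ φ c, f (Function.update φ i c) = f φ) :
    fderiv ℝ f θ (Pi.single i 1) = 0 := by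
  set v : Fin n → ℝ := Pi.single i 1 with hv
  have hline : HasDerivAt (fun s : ℝ => θ + s • v) v 0 := by
    simpa using ((hasDerivAt_id (0 : ℝ)).smul_const v).const_add θ
  have hbase : θ + (0 : ℝ) • v = θ := by simp
  have hF : HasFDerivAt f (fderiv ℝ f θ) (θ + (0 : ℝ) • v) := by
    rw [hbase]; exact hf.hasFDerivAt
  have hcomp : HasDerivAt (fun s : ℝ => f (θ + s • v)) (fderiv ℝ f θ v) 0 :=
    hF.comp_hasDerivAt 0 hline
  have hconst : (fun s : ℝ => f (θ + s • v)) = fun _ => f θ := by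
    funext s
    have hupd : θ + s • v = Function.update θ i (θ i + s) := by
      funext j
      by_cases hj : j = i
      · subst hj; simp [hv]
      · simp [hv, hj, Function.update_of_ne hj, Pi.single_eq_of_ne hj]
    rw [hupd, hinv]
  rw [hconst] at hcomp
  exact hcomp.unique (hasDerivAt_const 0 (f θ))

theorem fderiv_Fa_last {n : ℕ} (hn : 1 ≤ n) (θ : Fin n → ℝ) :
    fderiv ℝ (Fa n hn) θ (Pi.single ⟨n - 1, by omega⟩ 1) = 0 :=
  fderiv_dir_zero _ θ _ (Fa_diff hn θ) (fun φ c => Fa_update hn φ c)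

theorem fderiv_comb {n : ℕ} (hn : 1 ≤ n) (lst : Fin n) (u v : ℝ → ℝ) (θ : Fin n → ℝ)
    {u' v' : ℝ} (hu : HasDerivAt u u' (θ lst)) (hv : HasDerivAt v v' (θ lst)) (i : Fin n) :
    fderiv ℝ (fun φ : Fin n → ℝ => u (φ lst) • Fa n hn φ + v (φ lst) • Ev n) θ
        (Pi.single i 1) =
      u (θ lst) • fderiv ℝ (Fa n hn) θ (Pi.single i 1) +
        (if i = lst then (1 : ℝ) else 0) • (u' • Fa n hn θ + v' • Ev n) := by
  have hproj : HasFDerivAt (fun φ : Fin n → ℝ => φ lst)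
      (ContinuousLinearMap.proj (R := ℝ) (φ := fun _ : Fin n => ℝ) lst) θ := by
    exact hasFDerivAt_apply lst θ
  have hU : HasFDerivAt (fun φ : Fin n → ℝ => u (φ lst))
      (u' • ContinuousLinearMap.proj lst) θ := hu.comp_hasFDerivAt θ hproj
  have hV : HasFDerivAt (fun φ : Fin n → ℝ => v (φ lst))
      (v' • ContinuousLinearMap.proj lst) θ := hv.comp_hasFDerivAt θ hproj
  have hF : HasFDerivAt (Fa n hn) (fderiv ℝ (Fa n hn) θ) θ := (Fa_diff hn θ).hasFDerivAt
  have h1 := hU.smul hF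
  have h2 := hV.smul (hasFDerivAt_const (Ev n) θ)
  have h := ((h1.add h2).fderiv)
  rw [show (fun φ : Fin n → ℝ => u (φ lst) • Fa n hn φ + v (φ lst) • Ev n) = ((fun φ : Fin n → ℝ => u (φ lst)) • Fa n hn + (fun φ : Fin n → ℝ => v (φ lst)) • fun _ : Fin n → ℝ => Ev n) from rfl, h]
  simp only [ContinuousLinearMap.add_apply, ContinuousLinearMap.coe_smul', Pi.smul_apply,
    ContinuousLinearMap.smulRight_apply, ContinuousLinearMap.proj_apply,
    ContinuousLinearMap.zero_apply, smul_zero, zero_add, add_zero]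
  have hsingle : (Pi.single i 1 : Fin n → ℝ) lst = if i = lst then (1 : ℝ) else 0 := by
    by_cases hil : i = lst
    · subst hil; simp
    · rw [Pi.single_eq_of_ne (Ne.symm hil)]; rw [if_neg hil]
  rw [hsingle]
  by_cases hil : i = lst <;> simp [hil] <;> module

theorem fderiv_hsph_last {n : ℕ} (hn : 1 ≤ n) (φ : Fin n → ℝ) :
    fderiv ℝ (hsph n) φ (Pi.single ⟨n - 1, by omega⟩ 1) =
      Real.cos (φ ⟨n - 1, by omega⟩) • Fa n hn φ -
        Real.sin (φ ⟨n - 1, by omega⟩) • Ev n := by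
  rw [hsph_eq hn]
  have h := fderiv_comb hn ⟨n - 1, by omega⟩ Real.sin Real.cos φ
    (Real.hasDerivAt_sin (φ ⟨n - 1, by omega⟩)) (Real.hasDerivAt_cos (φ ⟨n - 1, by omega⟩))
    ⟨n - 1, by omega⟩
  rw [h, if_pos rfl, fderiv_Fa_last hn φ]
  module

/-- Coefficient functions. -/
noncomputable def Au (g : ℝ → ℝ) (s : ℝ) : ℝ :=
  (g s * Real.sin s - deriv g s * Real.cos s) / Real.sqrt (g s ^ 2 + deriv g s ^ 2)

noncomputable def Bu (g : ℝ → ℝ) (s : ℝ) : ℝ :=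
  (g s * Real.cos s + deriv g s * Real.sin s) / Real.sqrt (g s ^ 2 + deriv g s ^ 2)

noncomputable def Xu (g : ℝ → ℝ) (s : ℝ) : ℝ := g s * Real.sin s

noncomputable def Xv (g : ℝ → ℝ) (s : ℝ) : ℝ := g s * Real.cos s

theorem revGauss_eq {n : ℕ} (hn : 1 ≤ n) (g : ℝ → ℝ) :
    revGauss n hn g = fun φ : Fin n → ℝ =>
      Au g (φ ⟨n - 1, by omega⟩) • Fa n hn φ + Bu g (φ ⟨n - 1, by omega⟩) • Ev n := by
  funext φ
  unfold revGauss Au Bu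
  rw [fderiv_hsph_last hn φ]
  have := congrFun (hsph_eq hn) φ
  rw [this]
  module

theorem x_eq {n : ℕ} (hn : 1 ≤ n) (g : ℝ → ℝ) :
    (fun φ : Fin n → ℝ => g (φ ⟨n - 1, by omega⟩) • hsph n φ) = fun φ : Fin n → ℝ =>
      Xu g (φ ⟨n - 1, by omega⟩) • Fa n hn φ + Xv g (φ ⟨n - 1, by omega⟩) • Ev n := by
  funext φ
  unfold Xu Xv
  have := congrFun (hsph_eq hn) φ
  rw [this]
  module

end SpheresAux

open SpheresAux

/-- The principal curvatures of the hypersurface of revolution `x = g(θₙ)·σ`: the coordinate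
directions are eigendirections of the differential of the Gauss map, with eigenvalues
`K₁ = … = K_{n-1} = (g − (cos θₙ/sin θₙ)g')/(g√(g² + g'²))` and
`Kₙ = (g² + 2g'² − g g'')/(g² + g'²)^{3/2}`. -/
theorem spheres_fill_stmt15 (n : ℕ) (hn : 1 ≤ n) (g : ℝ → ℝ)
    (hg : ContDiff ℝ (⊤ : ℕ∞) g) (hpos : ∀ t, 0 < g t) (θ : Fin n → ℝ)
    (hθ : θ ⟨n - 1, by omega⟩ ∈ Set.Ioo 0 π) :
    let last : Fin n := ⟨n - 1, by omega⟩
    let t := θ last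
    ∀ i : Fin n,
      fderiv ℝ (revGauss n hn g) θ (Pi.single i 1) =
        (if i = last then
            (g t ^ 2 + 2 * deriv g t ^ 2 - g t * iteratedDeriv 2 g t) /
              (g t ^ 2 + deriv g t ^ 2) ^ ((3 : ℝ) / 2)
          else
            (g t - Real.cos t / Real.sin t * deriv g t) /
              (g t * Real.sqrt (g t ^ 2 + deriv g t ^ 2))) •
          fderiv ℝ (fun φ : Fin n → ℝ => g (φ last) • hsph n φ) θ (Pi.single i 1) := by
  intro last t i
  rw [show t = θ last from rfl]
  have h1 : ContDiff ℝ (((⊤ : ℕ∞) : WithTop ℕ∞)) g := hg.of_le (by simp)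
  have hgdiff : Differentiable ℝ g := (contDiff_infty_iff_deriv.mp h1).1
  have hg'diff : Differentiable ℝ (deriv g) :=
    (contDiff_infty_iff_deriv.mp (contDiff_infty_iff_deriv.mp h1).2).1
  have hgd : ∀ s, HasDerivAt g (deriv g s) s := fun s => (hgdiff s).hasDerivAt
  have hg'd : ∀ s, HasDerivAt (deriv g) (deriv (deriv g) s) s := fun s => (hg'diff s).hasDerivAt
  obtain ⟨ht0, htπ⟩ := hθ
  have hsin : 0 < Real.sin (θ last) := Real.sin_pos_of_pos_of_lt_pi ht0 htπ
  have ha : 0 < g (θ last) := hpos (θ last)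
  have hab : 0 < g (θ last) ^ 2 + deriv g (θ last) ^ 2 := by nlinarith
  have hq : 0 < Real.sqrt (g (θ last) ^ 2 + deriv g (θ last) ^ 2) := Real.sqrt_pos.mpr hab
  have hq2 : Real.sqrt (g (θ last) ^ 2 + deriv g (θ last) ^ 2) ^ 2 = g (θ last) ^ 2 + deriv g (θ last) ^ 2 :=
    Real.sq_sqrt hab.le
  have h32 : (g (θ last) ^ 2 + deriv g (θ last) ^ 2) ^ ((3 : ℝ) / 2) =
      Real.sqrt (g (θ last) ^ 2 + deriv g (θ last) ^ 2) ^ 3 := by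
    rw [Real.sqrt_eq_rpow,
      ← Real.rpow_natCast ((g (θ last) ^ 2 + deriv g (θ last) ^ 2) ^ ((1 : ℝ) / 2)) 3,
      ← Real.rpow_mul hab.le]
    norm_num
  have hiter : iteratedDeriv 2 g (θ last) = deriv (deriv g) (θ last) := by
    rw [iteratedDeriv_succ, iteratedDeriv_one]
  set Kn : ℝ := (g (θ last) ^ 2 + 2 * deriv g (θ last) ^ 2 - g (θ last) * iteratedDeriv 2 g (θ last)) /
      (g (θ last) ^ 2 + deriv g (θ last) ^ 2) ^ ((3 : ℝ) / 2) with hKn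
  -- derivative facts
  have hXu : HasDerivAt (Xu g) (deriv g (θ last) * Real.sin (θ last) + g (θ last) * Real.cos (θ last)) (θ last) :=
    (hgd (θ last)).mul (Real.hasDerivAt_sin (θ last))
  have hXv : HasDerivAt (Xv g) (deriv g (θ last) * Real.cos (θ last) + g (θ last) * -Real.sin (θ last)) (θ last) :=
    (hgd (θ last)).mul (Real.hasDerivAt_cos (θ last))
  have hw : HasDerivAt (fun s => g s ^ 2 + deriv g s ^ 2)
      ((2 : ℝ) * g (θ last) ^ 1 * deriv g (θ last) + (2 : ℝ) * deriv g (θ last) ^ 1 * deriv (deriv g) (θ last)) (θ last) := by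
    exact ((hgd (θ last)).pow 2).add ((hg'd (θ last)).pow 2)
  have hqd : HasDerivAt (fun s => Real.sqrt (g s ^ 2 + deriv g s ^ 2))
      (((2 : ℝ) * g (θ last) ^ 1 * deriv g (θ last) + (2 : ℝ) * deriv g (θ last) ^ 1 * deriv (deriv g) (θ last)) /
        (2 * Real.sqrt (g (θ last) ^ 2 + deriv g (θ last) ^ 2))) (θ last) := hw.sqrt hab.ne'
  have hAu : HasDerivAt (Au g)
      (Kn * (deriv g (θ last) * Real.sin (θ last) + g (θ last) * Real.cos (θ last))) (θ last) := by
    have h0 : HasDerivAt (fun s => g s * Real.sin s - deriv g s * Real.cos s)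
        ((deriv g (θ last) * Real.sin (θ last) + g (θ last) * Real.cos (θ last)) -
          (deriv (deriv g) (θ last) * Real.cos (θ last) + deriv g (θ last) * -Real.sin (θ last))) (θ last) :=
      ((hgd (θ last)).mul (Real.hasDerivAt_sin (θ last))).sub ((hg'd (θ last)).mul (Real.hasDerivAt_cos (θ last)))
    have h2 := h0.div hqd hq.ne'
    refine HasDerivAt.congr_deriv h2 ?_
    symm
    rw [hKn, hiter, h32, hq2]
    set q := Real.sqrt (g (θ last) ^ 2 + deriv g (θ last) ^ 2) with hqdef
    set a := g (θ last) with ha_def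
    set b := deriv g (θ last) with hb_def
    set c2 := deriv (deriv g) (θ last) with hc2_def
    set s := Real.sin (θ last) with hs_def
    set c := Real.cos (θ last) with hc_def
    have hq0 : q ≠ 0 := hq.ne'
    have hw0 : a ^ 2 + b ^ 2 ≠ 0 := hab.ne'
    have key : ((b * s + a * c - (c2 * c + b * -s)) * q - (a * s - b * c) * ((2 * a ^ 1 * b + 2 * b ^ 1 * c2) / (2 * q))) / (a ^ 2 + b ^ 2) = ((b * s + a * c - (c2 * c + b * -s)) * q ^ 2 - (a * s - b * c) * (a * b + b * c2)) / (q * (a ^ 2 + b ^ 2)) := by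
      field_simp
    rw [key, div_mul_eq_mul_div, div_eq_div_iff (pow_ne_zero 3 hq0) (mul_ne_zero hq0 hw0)]
    linear_combination (-(q ^ 3 * (b * s + a * c - (c2 * c + b * -s)) + q * ((b * s + a * c - (c2 * c + b * -s)) * (a ^ 2 + b ^ 2) - (a * s - b * c) * (a * b + b * c2)))) * hq2
  have hBu : HasDerivAt (Bu g)
      (Kn * (deriv g (θ last) * Real.cos (θ last) + g (θ last) * -Real.sin (θ last))) (θ last) := by
    have h0 : HasDerivAt (fun s => g s * Real.cos s + deriv g s * Real.sin s)
        ((deriv g (θ last) * Real.cos (θ last) + g (θ last) * -Real.sin (θ last)) +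
          (deriv (deriv g) (θ last) * Real.sin (θ last) + deriv g (θ last) * Real.cos (θ last))) (θ last) :=
      ((hgd (θ last)).mul (Real.hasDerivAt_cos (θ last))).add ((hg'd (θ last)).mul (Real.hasDerivAt_sin (θ last)))
    have h2 := h0.div hqd hq.ne'
    refine HasDerivAt.congr_deriv h2 ?_
    symm
    rw [hKn, hiter, h32, hq2]
    set q := Real.sqrt (g (θ last) ^ 2 + deriv g (θ last) ^ 2) with hqdef
    set a := g (θ last) with ha_def
    set b := deriv g (θ last) with hb_def
    set c2 := deriv (deriv g) (θ last) with hc2_def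
    set s := Real.sin (θ last) with hs_def
    set c := Real.cos (θ last) with hc_def
    have hq0 : q ≠ 0 := hq.ne'
    have hw0 : a ^ 2 + b ^ 2 ≠ 0 := hab.ne'
    have key : ((b * c + a * -s + (c2 * s + b * c)) * q - (a * c + b * s) * ((2 * a ^ 1 * b + 2 * b ^ 1 * c2) / (2 * q))) / (a ^ 2 + b ^ 2) = ((b * c + a * -s + (c2 * s + b * c)) * q ^ 2 - (a * c + b * s) * (a * b + b * c2)) / (q * (a ^ 2 + b ^ 2)) := by
      field_simp
    rw [key, div_mul_eq_mul_div, div_eq_div_iff (pow_ne_zero 3 hq0) (mul_ne_zero hq0 hw0)]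
    linear_combination (-(q ^ 3 * (b * c + a * -s + (c2 * s + b * c)) + q * ((b * c + a * -s + (c2 * s + b * c)) * (a ^ 2 + b ^ 2) - (a * c + b * s) * (a * b + b * c2)))) * hq2
  rw [revGauss_eq hn g, x_eq hn g]
  rw [fderiv_comb hn last (Au g) (Bu g) θ hAu hBu i,
    fderiv_comb hn last (Xu g) (Xv g) θ hXu hXv i]
  by_cases hil : i = last
  · rw [if_pos hil, if_pos hil]
    have hF0 : fderiv ℝ (Fa n hn) θ (Pi.single last 1) = 0 := fderiv_Fa_last hn θ
    rw [hil, hF0]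
    module
  · rw [if_neg hil, if_neg hil]
    have hS0 : Au g (θ last) = ((g (θ last) - Real.cos (θ last) / Real.sin (θ last) * deriv g (θ last)) /
        (g (θ last) * Real.sqrt (g (θ last) ^ 2 + deriv g (θ last) ^ 2))) * Xu g (θ last) := by
      unfold Au Xu
      field_simp
    rw [hS0]
    module
end

section
/- Let h be even, 2π-periodic, C^∞, with h''(0) = h''''(0) = 0, and g_ε = 1 + ε·h. Then the function t ↦ K(t) := (2g_ε'(t)² − g_ε(t)g_ε''(t) + g_ε(t)²)/((g_ε'(t))² + g_ε(t)²)^{3/2} satisfies K'(t) = o(t) as t → 0. -/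
open Real Asymptotics

theorem spheres_fill_stmt16 (h : ℝ → ℝ) (hsmooth : ContDiff ℝ (⊤ : ℕ∞) h)
    (heven : ∀ t, h (-t) = h t) (hper : ∀ t, h (t + 2 * π) = h t)
    (h2 : iteratedDeriv 2 h 0 = 0) (h4 : iteratedDeriv 4 h 0 = 0)
    (ε : ℝ) (hε : 0 < 1 + ε * h 0) :
    deriv (fun t =>
        (2 * deriv (fun s => 1 + ε * h s) t ^ 2 -
            (1 + ε * h t) * iteratedDeriv 2 (fun s => 1 + ε * h s) t + (1 + ε * h t) ^ 2) /
          (deriv (fun s => 1 + ε * h s) t ^ 2 + (1 + ε * h t) ^ 2) ^ ((3 : ℝ) / 2))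
      =o[nhds 0] (fun t => t) := by
  have hsm : ContDiff ℝ (⊤ : ℕ∞) h := hsmooth.of_le (by simp)
  set g : ℝ → ℝ := fun s => 1 + ε * h s with hg_def
  have hgt : ∀ t : ℝ, (1 : ℝ) + ε * h t = g t := fun t => rfl
  simp only [hgt]
  set u : ℝ → ℝ := deriv g with hu_def
  set v : ℝ → ℝ := iteratedDeriv 2 g with hv_def
  -- smoothness
  have hgc : ContDiff ℝ (⊤ : ℕ∞) g := contDiff_const.add (contDiff_const.mul hsm)
  have huc : ContDiff ℝ (⊤ : ℕ∞) u := (contDiff_infty_iff_deriv.mp hgc).2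
  have hv_eq : v = deriv u := by rw [hv_def, hu_def, iteratedDeriv_succ, iteratedDeriv_one]
  have hvc : ContDiff ℝ (⊤ : ℕ∞) v := by
    rw [hv_eq]; exact (contDiff_infty_iff_deriv.mp huc).2
  set w : ℝ → ℝ := deriv v with hw_def
  have hwc : ContDiff ℝ (⊤ : ℕ∞) w := by
    rw [hw_def]; exact (contDiff_infty_iff_deriv.mp hvc).2
  -- pointwise derivatives
  have hG : ∀ t, HasDerivAt g (u t) t := fun t => ((hgc.differentiable (by simp)) t).hasDerivAt
  have hU : ∀ t, HasDerivAt u (v t) t := by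
    intro t; rw [hv_eq]; exact ((huc.differentiable (by simp)) t).hasDerivAt
  have hV : ∀ t, HasDerivAt v (w t) t := by
    intro t; rw [hw_def]; exact ((hvc.differentiable (by simp)) t).hasDerivAt
  have hW : ∀ t, HasDerivAt w (deriv w t) t := fun t =>
    ((hwc.differentiable (by simp)) t).hasDerivAt
  -- values at 0
  have hodd : ∀ n : ℕ, Odd n → iteratedDeriv n h 0 = 0 := by
    intro n hn
    have h1 : (fun x => h (-x)) = h := funext heven
    have hcn := iteratedDeriv_comp_neg n h 0
    rw [h1, hn.neg_one_pow, neg_zero] at hcn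
    simp only [neg_smul, one_smul] at hcn
    linarith
  have hgh : ∀ n : ℕ, 0 < n → iteratedDeriv n g 0 = ε * iteratedDeriv n h 0 := by
    intro n hn
    rw [hg_def, ← iteratedDerivWithin_univ, ← iteratedDerivWithin_univ]
    rw [iteratedDerivWithin_const_add hn]
    exact iteratedDerivWithin_const_mul_field ε h
  have hu0 : u 0 = 0 := by
    rw [hu_def, ← iteratedDeriv_one, hgh 1 one_pos, hodd 1 ⟨0, by norm_num⟩, mul_zero]
  have hv0 : v 0 = 0 := by rw [hv_def, hgh 2 (by norm_num), h2, mul_zero]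
  have hw0 : w 0 = 0 := by
    have hw3 : w = iteratedDeriv 3 g := by
      rw [hw_def, hv_def, ← iteratedDeriv_succ]
    rw [hw3, hgh 3 (by norm_num), hodd 3 ⟨1, by norm_num⟩, mul_zero]
  have hx0 : deriv w 0 = 0 := by
    have hw4 : deriv w = iteratedDeriv 4 g := by
      rw [hw_def, hv_def, ← iteratedDeriv_succ, ← iteratedDeriv_succ]
    rw [hw4, hgh 4 (by norm_num), h4, mul_zero]
  have hg0 : 0 < g 0 := hε
  have hD0 : 0 < u 0 ^ 2 + g 0 ^ 2 := by nlinarith [sq_nonneg (u 0)]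
  have hDpos : ∀ᶠ t in nhds 0, 0 < u t ^ 2 + g t ^ 2 := by
    have hc : Continuous fun t => u t ^ 2 + g t ^ 2 :=
      ((huc.continuous).pow 2).add ((hgc.continuous).pow 2)
    exact (hc.tendsto 0).eventually (eventually_gt_nhds hD0)
  -- derivative of the numerator
  have hN : ∀ t, HasDerivAt (fun t => 2 * u t ^ 2 - g t * v t + g t ^ 2)
      (2 * (2 * u t ^ 1 * v t) - (u t * v t + g t * w t) + 2 * g t ^ 1 * u t) t := by
    intro t
    exact ((((hU t).pow 2).const_mul 2).sub ((hG t).mul (hV t))).add ((hG t).pow 2)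
  -- derivative of the base
  have hDD : ∀ t, HasDerivAt (fun t => u t ^ 2 + g t ^ 2)
      (2 * u t ^ 1 * v t + 2 * g t ^ 1 * u t) t := by
    intro t
    exact ((hU t).pow 2).add ((hG t).pow 2)
  -- derivative of the denominator
  have hR : ∀ t, HasDerivAt (fun t => (u t ^ 2 + g t ^ 2) ^ ((3:ℝ)/2))
      ((2 * u t ^ 1 * v t + 2 * g t ^ 1 * u t) * ((3:ℝ)/2) *
        (u t ^ 2 + g t ^ 2) ^ ((3:ℝ)/2 - 1)) t := by
    intro t
    exact (hDD t).rpow_const (Or.inr (by norm_num))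
  -- the derivative of K agrees with an explicit function near 0
  have hKΦ : deriv (fun t => (2 * u t ^ 2 - g t * v t + g t ^ 2) /
        (u t ^ 2 + g t ^ 2) ^ ((3:ℝ)/2)) =ᶠ[nhds 0] (fun t =>
      ((2 * (2 * u t ^ 1 * v t) - (u t * v t + g t * w t) + 2 * g t ^ 1 * u t) *
          (u t ^ 2 + g t ^ 2) ^ ((3:ℝ)/2) -
        (2 * u t ^ 2 - g t * v t + g t ^ 2) *
          ((2 * u t ^ 1 * v t + 2 * g t ^ 1 * u t) * ((3:ℝ)/2) *
            (u t ^ 2 + g t ^ 2) ^ ((3:ℝ)/2 - 1))) /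
      ((u t ^ 2 + g t ^ 2) ^ ((3:ℝ)/2)) ^ 2) := by
    filter_upwards [hDpos] with t ht
    have hRne : (u t ^ 2 + g t ^ 2) ^ ((3:ℝ)/2) ≠ 0 := (Real.rpow_pos_of_pos ht _).ne'
    exact ((hN t).div (hR t) hRne).deriv
  -- derivative of Φ at 0
  have hS := (hDD 0).rpow_const (p := (3:ℝ)/2 - 1) (Or.inl hD0.ne')
  have hinner1 := (((hU 0).pow 1).const_mul 2).mul (hV 0)
  have hinner2 := (((hG 0).pow 1).const_mul 2).mul (hU 0)
  have hA := ((hinner1.const_mul 2).sub (((hU 0).mul (hV 0)).add ((hG 0).mul (hW 0)))).add hinner2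
  have hB := ((hinner1.add hinner2).mul_const ((3:ℝ)/2)).mul hS
  have hP := (hA.mul (hR 0)).sub ((hN 0).mul hB)
  have hQ := (hR 0).pow 2
  have hQne : ((u 0 ^ 2 + g 0 ^ 2) ^ ((3:ℝ)/2)) ^ 2 ≠ 0 :=
    pow_ne_zero 2 (Real.rpow_pos_of_pos hD0 _).ne'
  have hΦd : HasDerivAt (fun t =>
      ((2 * (2 * u t ^ 1 * v t) - (u t * v t + g t * w t) + 2 * g t ^ 1 * u t) *
          (u t ^ 2 + g t ^ 2) ^ ((3:ℝ)/2) -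
        (2 * u t ^ 2 - g t * v t + g t ^ 2) *
          ((2 * u t ^ 1 * v t + 2 * g t ^ 1 * u t) * ((3:ℝ)/2) *
            (u t ^ 2 + g t ^ 2) ^ ((3:ℝ)/2 - 1))) /
      ((u t ^ 2 + g t ^ 2) ^ ((3:ℝ)/2)) ^ 2) 0 0 := by
    have H := hP.div hQ hQne
    refine H.congr_deriv ?_
    simp [hu0, hv0, hw0, hx0]
  have hΦ0 : ((2 * (2 * u 0 ^ 1 * v 0) - (u 0 * v 0 + g 0 * w 0) + 2 * g 0 ^ 1 * u 0) *
          (u 0 ^ 2 + g 0 ^ 2) ^ ((3:ℝ)/2) -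
        (2 * u 0 ^ 2 - g 0 * v 0 + g 0 ^ 2) *
          ((2 * u 0 ^ 1 * v 0 + 2 * g 0 ^ 1 * u 0) * ((3:ℝ)/2) *
            (u 0 ^ 2 + g 0 ^ 2) ^ ((3:ℝ)/2 - 1))) /
      ((u 0 ^ 2 + g 0 ^ 2) ^ ((3:ℝ)/2)) ^ 2 = 0 := by
    simp [hu0, hv0, hw0]
  have hlittle := hasDerivAt_iff_isLittleO.mp hΦd
  refine hKΦ.trans_isLittleO ?_
  simp only [hΦ0, sub_zero, smul_zero, mul_zero] at hlittle
  simpa using hlittle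
end

section
/- Let h(t) = sin⁶ t and g_ε = 1 + ε·h with ε ∈ (−1/7, 2/5). Then for all t ∈ [0, π]: (i) g_ε(π) + g_ε(t)·cos t > 0 for t ∈ [0, π); (ii) 2g_ε'(t)² − g_ε(t)g_ε''(t) + g_ε(t)² > 0; and (iii) g_ε(t)·sin t − g_ε'(t)·cos t > 0 for t ∈ (0, π). -/
/-!
Put `x = sin² t` and `c = cos t`. The third quantity is `sin t · (1 + ε x² (7x - 6))`. For `c < 0`
the first is at least `(1 + c) (1 - (2/5) |c| (1 - c) (1 - c²)²)`, using `sin⁶ t = (1 - c²)³` and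
`ε < 2/5`. The second is the quadratic `1 + 2aε + bε²` in `ε`, with `a = x²(19x - 15)` and
`b = 7x⁵(6 - 5x) ≥ 0`. When `aε < 0`, compare with the endpoint `e ∈ {-1/7, 2/5}` on the side
of `ε`: the value there is nonnegative (it vanishes at `x = 1` for `e = -1/7`), so either the vertex
lies beyond `e` and the endpoint value is a lower bound, or `|a| < b|e|` and the minimum
`1 - a²/b` exceeds `1 - b e² ≥ 0`.
-/

open Real

lemma one_add_two_mul_add_mul_sq_pos {a b e ε : ℝ} (hb : 0 ≤ b) (hbe : b * e ^ 2 ≤ 1)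
    (he : 0 ≤ 1 + 2 * a * e + b * e ^ 2) (hε₀ : 0 ≤ ε) (hεe : ε < e) :
    0 < 1 + 2 * a * ε + b * ε ^ 2 := by
  rcases le_or_gt 0 a with ha | ha
  · positivity
  rcases le_or_gt (a + b * e) 0 with hv | hv
  · have : 0 < (ε - e) * (2 * a + b * (ε + e)) :=
      mul_pos_of_neg_of_neg (by linarith) (by nlinarith)
    nlinarith
  · rcases eq_or_lt_of_le hε₀ with rfl | hε₀
    · norm_num
    nlinarith [mul_nonneg hb (sq_nonneg (e - ε))]

lemma one_add_two_mul_mul_add_mul_mul_sq_pos {ε x : ℝ} (hε : ε ∈ Set.Ioo (-(1 / 7) : ℝ) (2 / 5))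
    (hx₀ : 0 ≤ x) (hx₁ : x ≤ 1) :
    0 < 1 + 2 * (x ^ 2 * (19 * x - 15)) * ε + 7 * x ^ 5 * (6 - 5 * x) * ε ^ 2 := by
  obtain ⟨hε₁, hε₂⟩ := hε
  have hb : 0 ≤ 7 * x ^ 5 * (6 - 5 * x) := mul_nonneg (by positivity) (by linarith)
  rcases le_or_gt 0 ε with hε₀ | hε₀
  · rcases le_or_gt 0 (x ^ 2 * (19 * x - 15)) with ha | ha
    · positivity
    have hx : x ≤ 4 / 5 := by nlinarith [sq_nonneg x]
    refine one_add_two_mul_add_mul_sq_pos hb ?_ ?_ hε₀ hε₂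
    · have h₄ : x ^ 4 ≤ (4 / 5) ^ 4 := pow_le_pow_left₀ hx₀ hx 4
      have h₁ : x * (6 - 5 * x) ≤ 9 / 5 := by nlinarith [sq_nonneg (x - 3 / 5)]
      nlinarith [mul_le_mul h₄ h₁ (mul_nonneg hx₀ (by linarith)) (by positivity)]
    · nlinarith [mul_nonneg hx₀ (sq_nonneg (60 * x - 29)),
        mul_nonneg (sub_nonneg.2 hx₁) (sq_nonneg (60 * x - 29)), pow_nonneg hx₀ 5,
        mul_nonneg (pow_nonneg hx₀ 5) (sub_nonneg.2 hx₁)]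
  · have h := one_add_two_mul_add_mul_sq_pos (a := -(x ^ 2 * (19 * x - 15))) (e := 1 / 7) hb
      ?_ ?_ (neg_nonneg.2 hε₀.le) (by linarith)
    · linear_combination h
    · nlinarith [pow_le_one₀ hx₀ hx₁ (n := 5)]
    · have hq : 0 ≤ (1 - x) * (5 * x ^ 5 - x ^ 4 - x ^ 3 + 37 * x ^ 2 + 7 * x + 7) :=
        mul_nonneg (by linarith) (by
          nlinarith [pow_le_one₀ hx₀ hx₁ (n := 4), pow_le_one₀ hx₀ hx₁ (n := 3),
            pow_nonneg hx₀ 5])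
      linear_combination hq / 7

lemma one_add_one_add_mul_mul_pos {ε c : ℝ} (hε₁ : -1 ≤ ε) (hε₂ : ε ≤ 2 / 5) (hc₁ : -1 < c)
    (hc₂ : c ≤ 1) : 0 < 1 + (1 + ε * (1 - c ^ 2) ^ 3) * c := by
  have hs₀ : 0 ≤ 1 - c ^ 2 := by nlinarith
  have hs₁ : 1 - c ^ 2 ≤ 1 := by nlinarith
  rcases le_or_gt 0 c with hc | hc
  · have : 0 ≤ 1 + ε * (1 - c ^ 2) ^ 3 := by
      nlinarith [pow_le_one₀ hs₀ hs₁ (n := 3), pow_nonneg hs₀ 3]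
    positivity
  · have hu : -c * (1 - c) * (1 - c ^ 2) ^ 2 < 2 := by
      nlinarith [pow_le_one₀ hs₀ hs₁ (n := 2), mul_pos (neg_pos.2 hc) (by linarith : 0 < 1 - c)]
    calc 0 < (1 + c) * (1 - 2 / 5 * (-c * (1 - c) * (1 - c ^ 2) ^ 2)) :=
          mul_pos (by linarith) (by linarith)
      _ = 1 + (1 + 2 / 5 * (1 - c ^ 2) ^ 3) * c := by ring
      _ ≤ 1 + (1 + ε * (1 - c ^ 2) ^ 3) * c := by
          nlinarith [mul_nonneg (sub_nonneg.2 hε₂)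
            (mul_nonneg (pow_nonneg hs₀ 3) (neg_nonneg.2 hc.le))]

lemma one_add_mul_sq_mul_pos {ε x : ℝ} (hε₁ : -1 < ε) (hε₂ : ε ≤ 2 / 5) (hx₀ : 0 ≤ x)
    (hx₁ : x ≤ 1) : 0 < 1 + ε * x ^ 2 * (7 * x - 6) := by
  nlinarith [sq_nonneg (x - 4 / 7), mul_nonneg hx₀ (sq_nonneg (x - 4 / 7)),
    mul_nonneg (sub_nonneg.2 hx₁) (mul_nonneg hx₀ hx₀)]

lemma deriv_one_add_mul_sin_pow_six (ε : ℝ) :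
    deriv (fun s => 1 + ε * sin s ^ 6) = fun t => 6 * ε * sin t ^ 5 * cos t := by
  funext t
  rw [((((hasDerivAt_sin t).fun_pow 6).const_mul ε).const_add 1).deriv]
  simp only [Nat.cast_ofNat]
  ring

lemma iteratedDeriv_two_one_add_mul_sin_pow_six (ε t : ℝ) :
    iteratedDeriv 2 (fun s => 1 + ε * sin s ^ 6) t =
      6 * ε * (5 * sin t ^ 4 * cos t ^ 2 - sin t ^ 6) := by
  rw [iteratedDeriv_succ, iteratedDeriv_one, deriv_one_add_mul_sin_pow_six,
    ((((hasDerivAt_sin t).fun_pow 5).const_mul (6 * ε)).fun_mul (hasDerivAt_cos t)).deriv]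
  simp only [Nat.cast_ofNat]
  ring

theorem spheres_fill_stmt19 (ε : ℝ) (hε : ε ∈ Set.Ioo (-(1 / 7) : ℝ) (2 / 5)) :
    (∀ t ∈ Set.Ico 0 π,
      0 < (1 + ε * Real.sin π ^ 6) + (1 + ε * Real.sin t ^ 6) * Real.cos t) ∧
    (∀ t ∈ Set.Icc 0 π,
      0 < 2 * deriv (fun s => 1 + ε * Real.sin s ^ 6) t ^ 2 -
          (1 + ε * Real.sin t ^ 6) * iteratedDeriv 2 (fun s => 1 + ε * Real.sin s ^ 6) t +
          (1 + ε * Real.sin t ^ 6) ^ 2) ∧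
    (∀ t ∈ Set.Ioo 0 π,
      0 < (1 + ε * Real.sin t ^ 6) * Real.sin t -
          deriv (fun s => 1 + ε * Real.sin s ^ 6) t * Real.cos t) := by
  obtain ⟨hε₁, hε₂⟩ := hε
  have hsc (t : ℝ) := sin_sq_add_cos_sq t
  refine ⟨fun t ⟨ht₀, htπ⟩ => ?_, fun t _ => ?_, fun t ⟨ht₀, htπ⟩ => ?_⟩
  · have hc : -1 < cos t := by simpa using cos_lt_cos_of_nonneg_of_le_pi ht₀ le_rfl htπ
    have h := one_add_one_add_mul_mul_pos (by linarith) hε₂.le hc (cos_le_one t)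
    rw [← sin_sq] at h
    rw [sin_pi]
    linear_combination h
  · rw [deriv_one_add_mul_sin_pow_six, iteratedDeriv_two_one_add_mul_sin_pow_six]
    have h := one_add_two_mul_mul_add_mul_mul_sq_pos ⟨hε₁, hε₂⟩ (sq_nonneg (sin t))
      (sin_sq_le_one t)
    linear_combination h + (30 * ε * sin t ^ 4 - 42 * ε ^ 2 * sin t ^ 10) * hsc t
  · rw [deriv_one_add_mul_sin_pow_six]
    have h := mul_pos (sin_pos_of_pos_of_lt_pi ht₀ htπ)
      (one_add_mul_sq_mul_pos (by linarith) hε₂.le (sq_nonneg (sin t)) (sin_sq_le_one t))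
    linear_combination h + 6 * ε * sin t ^ 5 * hsc t
end
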